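/- Given two consecutive jobs where job 2 is executed at speed s₂ > s₁ ≥ 0 (job 1 at speed s₁) and both speeds are feasible swaps (i.e., transferring a small amount of work from the faster to the slower execution preserves feasibility), the total energy ∫ speed^α strictly decreases when the speeds are made closer; formally, for w₁, w₂ > 0, T₁, T₂ > 0 with w₁/T₁ < w₂/T₂, and any ε with 0 < ε < (w₂·T₁ - w₁·T₂)/(T₁ + T₂), we have (w₁+ε)^α/T₁^(α-1) + (w₂-ε)^α/T₂^(α-1) < w₁^α/T₁^(α-1) + w₂^α/T₂^(α-1). -/

import Mathlib

/-!
The energy of work `w` run at constant speed in a window of length `T` is the perspective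
`T * (w / T) ^ α` of the strictly convex function `x ↦ x ^ α`. Moving `ε` work from the fast
window to the slow one raises the slow speed by `ε / T₁` and lowers the fast one by `ε / T₂`,
and the bound on `ε` keeps the two new speeds from crossing. Since secant slopes of a strictly
convex function increase, the energy added in the first window is smaller than the energy
saved in the second.
-/

open Set

section Exchange

variable {𝕜 : Type*} [Field 𝕜] [LinearOrder 𝕜] [IsStrictOrderedRing 𝕜] {s : Set 𝕜} {f : 𝕜 → 𝕜}

theorem StrictConvexOn.slope_lt_slope_of_le (hf : StrictConvexOn 𝕜 s f) {a b c d : 𝕜}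
    (ha : a ∈ s) (hb : b ∈ s) (hc : c ∈ s) (hd : d ∈ s) (hab : a < b) (hbc : b ≤ c)
    (hcd : c < d) :
    (f b - f a) / (b - a) < (f d - f c) / (d - c) := by
  rcases hbc.eq_or_lt with rfl | hbc
  · exact hf.slope_strict_mono_adjacent ha hd hab hcd
  · exact (hf.slope_strict_mono_adjacent ha hc hab hbc).trans
      (hf.slope_strict_mono_adjacent hb hd hbc hcd)

theorem StrictConvexOn.perspective_exchange_lt (hf : StrictConvexOn 𝕜 s f)
    {w₁ w₂ T₁ T₂ ε : 𝕜} (hT₁ : 0 < T₁) (hT₂ : 0 < T₂) (hε : 0 < ε)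
    (h₁ : w₁ / T₁ ∈ s) (h₂ : w₂ / T₂ ∈ s) (hle : (w₁ + ε) / T₁ ≤ (w₂ - ε) / T₂) :
    T₁ * f ((w₁ + ε) / T₁) + T₂ * f ((w₂ - ε) / T₂) <
      T₁ * f (w₁ / T₁) + T₂ * f (w₂ / T₂) := by
  have hlt₁ : w₁ / T₁ < (w₁ + ε) / T₁ := by gcongr; linarith
  have hlt₂ : (w₂ - ε) / T₂ < w₂ / T₂ := by gcongr; linarith
  have hmem : Icc (w₁ / T₁) (w₂ / T₂) ⊆ s := hf.1.ordConnected.out h₁ h₂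
  have hslope := hf.slope_lt_slope_of_le h₁
    (hmem ⟨hlt₁.le, hle.trans hlt₂.le⟩) (hmem ⟨hlt₁.le.trans hle, hlt₂.le⟩) h₂ hlt₁ hle hlt₂
  have hstep₁ : (w₁ + ε) / T₁ - w₁ / T₁ = ε / T₁ := by ring
  have hstep₂ : w₂ / T₂ - (w₂ - ε) / T₂ = ε / T₂ := by ring
  rw [hstep₁, hstep₂, div_div_eq_mul_div, div_div_eq_mul_div, div_lt_div_iff_of_pos_right hε]
    at hslope
  linarith

end Exchange

theorem Real.rpow_div_rpow_sub_one {w T : ℝ} (α : ℝ) (hw : 0 ≤ w) (hT : 0 < T) :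
    w ^ α / T ^ (α - 1) = T * (w / T) ^ α := by
  rw [Real.div_rpow hw hT.le, Real.rpow_sub hT, Real.rpow_one]
  field_simp

theorem exchange_work_decreases_energy_general
    (α w₁ w₂ T₁ T₂ ε : ℝ) (hα : 2 ≤ α)
    (hw₁ : 0 < w₁) (hT₁ : 0 < T₁) (hT₂ : 0 < T₂)
    (hε₀ : 0 < ε) (hε₁ : ε < (w₂ * T₁ - w₁ * T₂) / (T₁ + T₂)) :
    (w₁ + ε) ^ α / T₁ ^ (α - 1) + (w₂ - ε) ^ α / T₂ ^ (α - 1) <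
      w₁ ^ α / T₁ ^ (α - 1) + w₂ ^ α / T₂ ^ (α - 1) := by
  rw [lt_div_iff₀ (by positivity)] at hε₁
  have hw₂ε : 0 < w₂ - ε := by nlinarith
  have hw₂ : 0 ≤ w₂ := by linarith
  have hspeeds : (w₁ + ε) / T₁ ≤ (w₂ - ε) / T₂ := by
    rw [div_le_div_iff₀ hT₁ hT₂]
    linarith
  rw [Real.rpow_div_rpow_sub_one α (by linarith) hT₁, Real.rpow_div_rpow_sub_one α hw₂ε.le hT₂,
    Real.rpow_div_rpow_sub_one α hw₁.le hT₁, Real.rpow_div_rpow_sub_one α hw₂ hT₂]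
  exact (strictConvexOn_rpow (by linarith)).perspective_exchange_lt hT₁ hT₂ hε₀
    (div_nonneg hw₁.le hT₁.le) (div_nonneg hw₂ hT₂.le) hspeeds

/-- Strict-convexity exchange: for `α ≥ 2`, workloads `w₁, w₂ > 0` executed in windows of
lengths `T₁, T₂ > 0` with `w₁/T₁ < w₂/T₂`, transferring `ε` work (for any
`0 < ε < (w₂·T₁ - w₁·T₂)/(T₁ + T₂)`) from the faster to the slower execution strictly
decreases the total energy. -/
theorem exchange_work_decreases_energy
    (α w₁ w₂ T₁ T₂ ε : ℝ) (hα : 2 ≤ α)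
    (hw₁ : 0 < w₁) (hw₂ : 0 < w₂) (hT₁ : 0 < T₁) (hT₂ : 0 < T₂)
    (hspeed : w₁ / T₁ < w₂ / T₂)
    (hε₀ : 0 < ε) (hε₁ : ε < (w₂ * T₁ - w₁ * T₂) / (T₁ + T₂)) :
    (w₁ + ε) ^ α / T₁ ^ (α - 1) + (w₂ - ε) ^ α / T₂ ^ (α - 1) <
      w₁ ^ α / T₁ ^ (α - 1) + w₂ ^ α / T₂ ^ (α - 1) :=
  exchange_work_decreases_energy_general α w₁ w₂ T₁ T₂ ε hα hw₁ hT₁ hT₂ hε₀ hε₁
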